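/- Let $k \geq 2$, and let $a_1, \dots, a_k$ and $b_1, \dots, b_{k-2}$ be nonzero complex numbers such that the denominators below are nonzero. Then, with $\theta(x) = 1 - x$ (the $p = 0$ theta function) and the convention $\theta(ab^{\pm}) = \theta(ab)\theta(a/b)$, $\sum_{l=1}^{k} \frac{a_l \prod_{j=1}^{k-2}(1 - a_l b_j)(1 - a_l/b_j)}{\prod_{j=1, j\neq l}^{k}(1 - a_l a_j)(1 - a_l/a_j)} = 0$. -/

import Mathlib

/-!
Substituting `x = a + a⁻¹` turns every factor into a difference of such sums:
`(1 - a b) (1 - a / b) = a ((a + a⁻¹) - (b + b⁻¹))`. After cancelling the powers of `a l`,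
the `l`-th summand becomes `P(x_l) / ∏_{j ≠ l} (x_l - x_j)` for the monic polynomial
`P = ∏_j (X - (b_j + b_j⁻¹))` of degree `k - 2`. By Lagrange interpolation at the `k` distinct
nodes `x_l`, this sum is the coefficient of `X ^ (k - 1)` in `P`, which vanishes.
-/

open Finset Polynomial

theorem Lagrange.sum_eval_div_prod_sub_eq_zero {F ι : Type*} [Field F] [DecidableEq ι]
    {s : Finset ι} {v : ι → F} (hvs : Set.InjOn v s) {P : F[X]} (hP : P.degree < ↑(#s - 1)) :
    ∑ i ∈ s, P.eval (v i) / ∏ j ∈ s.erase i, (v i - v j) = 0 := by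
  rw [← Lagrange.coeff_eq_sum hvs (hP.trans_le (by exact_mod_cast Nat.sub_le _ _)),
    coeff_eq_zero_of_degree_lt hP]

theorem one_sub_mul_mul_one_sub_div {F : Type*} [Field F] {u v : F} (hu : u ≠ 0) (hv : v ≠ 0) :
    (1 - u * v) * (1 - u / v) = u * ((u + u⁻¹) - (v + v⁻¹)) := by
  field_simp
  ring

theorem prod_one_sub_mul_mul_one_sub_div {F ι : Type*} [Field F] {s : Finset ι} {u : F}
    {w : ι → F} (hu : u ≠ 0) (hw : ∀ j ∈ s, w j ≠ 0) :
    ∏ j ∈ s, (1 - u * w j) * (1 - u / w j) = u ^ #s * ∏ j ∈ s, ((u + u⁻¹) - (w j + (w j)⁻¹)) := by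
  rw [prod_congr rfl fun j hj => one_sub_mul_mul_one_sub_div hu (hw j hj), prod_mul_distrib,
    prod_const]

/-- The `p = 0` case of Gustafson's theta function identity. -/
theorem gustafson_identity_trig (k : ℕ) (hk : 2 ≤ k) (a b : ℕ → ℂ)
    (ha : ∀ l < k, a l ≠ 0) (hb : ∀ j < k - 2, b j ≠ 0)
    (hden : ∀ l < k, ∀ j < k, j ≠ l → (1 - a l * a j) ≠ 0 ∧ (1 - a l / a j) ≠ 0) :
    ∑ l ∈ Finset.range k,
      a l * (∏ j ∈ Finset.range (k - 2), ((1 - a l * b j) * (1 - a l / b j))) /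
        (∏ j ∈ (Finset.range k).erase l, ((1 - a l * a j) * (1 - a l / a j))) = 0 := by
  set x : ℕ → ℂ := fun l => a l + (a l)⁻¹
  set y : ℕ → ℂ := fun j => b j + (b j)⁻¹
  have hx : Set.InjOn x (range k) := by
    intro l hl j hj hxlj
    simp only [coe_range, Set.mem_Iio] at hl hj
    by_contra hne
    obtain ⟨h1, h2⟩ := hden l hl j hj (Ne.symm hne)
    apply mul_ne_zero h1 h2
    rw [one_sub_mul_mul_one_sub_div (ha l hl) (ha j hj)]
    exact mul_eq_zero_of_right _ (sub_eq_zero.mpr hxlj)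
  have hterm : ∀ l ∈ range k,
      a l * (∏ j ∈ range (k - 2), ((1 - a l * b j) * (1 - a l / b j))) /
        (∏ j ∈ (range k).erase l, ((1 - a l * a j) * (1 - a l / a j))) =
      (Lagrange.nodal (range (k - 2)) y).eval (x l) / ∏ j ∈ (range k).erase l, (x l - x j) := by
    intro l hl
    have hal := ha l (mem_range.mp hl)
    rw [prod_one_sub_mul_mul_one_sub_div hal fun j hj => hb j (mem_range.mp hj),
      prod_one_sub_mul_mul_one_sub_div hal fun j hj => ha j (mem_range.mp (mem_of_mem_erase hj)),
      card_range, card_erase_of_mem hl, card_range, Lagrange.eval_nodal,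
      show k - 1 = k - 2 + 1 by omega, pow_succ', ← mul_assoc,
      mul_div_mul_left _ _ (mul_ne_zero hal (pow_ne_zero _ hal))]
  rw [sum_congr rfl hterm]
  refine Lagrange.sum_eval_div_prod_sub_eq_zero hx ?_
  rw [Lagrange.degree_nodal, card_range, card_range]
  exact_mod_cast (by omega : k - 2 < k - 1)
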